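/- arXiv:1905.10820 — 4 statements merged into one kernel-verified Lean document; each statement's English description precedes it below -/
import Mathlib

section
/- For p in (1,2], t in (0,1), and vectors v, w in ℓ^p: ‖t•v + (1-t)•w‖_p^2 ≤ t‖v‖_p^2 + (1-t)‖w‖_p^2 − (p−1)·t·(1−t)·‖v−w‖_p^2. -/
open Real Set Filter Topology
open scoped ENNReal

/-!
Ball–Carlen–Lieb: the scalar two-point inequality
`2 (u² + (q-1) d²)^{q/2} ≤ |u+d|^q + |u-d|^q` (from `(1+x)^q + (1-x)^q ≥ 2 + q(q-1)x²` and
Bernoulli) is summed over coordinates; the reverse Minkowski inequality for the exponent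
`q/2 ≤ 1` and convexity of `x ↦ x^{2/q}` turn the sum into
`2‖u‖² + 2(q-1)‖d‖² ≤ ‖u+d‖² + ‖u-d‖²`. Applied to `u ± d = z s, z r` on the segment
`z s = s v + (1-s) w`, this says that `s ↦ ‖z s‖² - (q-1)‖v-w‖² s²` is midpoint convex; being
continuous, it is convex, which is the claim.
-/

lemma sq_rpow_div_two (x q : ℝ) : (x ^ 2) ^ (q / 2) = |x| ^ q := by
  rw [← sq_abs, ← rpow_natCast, ← rpow_mul (abs_nonneg x)]
  congr 1
  push_cast
  ring

lemma hasDerivAt_one_add_rpow (e : ℝ) {x : ℝ} (hx : -1 < x) :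
    HasDerivAt (fun y => (1 + y) ^ e) (e * (1 + x) ^ (e - 1)) x := by
  simpa using ((hasDerivAt_id x).const_add 1).rpow_const (p := e)
    (Or.inl (by simp only [id]; linarith))

lemma hasDerivAt_one_sub_rpow (e : ℝ) {x : ℝ} (hx : x < 1) :
    HasDerivAt (fun y => (1 - y) ^ e) (-(e * (1 - x) ^ (e - 1))) x := by
  simpa using ((hasDerivAt_id x).const_sub 1).rpow_const (p := e)
    (Or.inl (by simp only [id]; linarith))

lemma continuous_one_add_rpow {e : ℝ} (he : 0 ≤ e) : Continuous fun y : ℝ => (1 + y) ^ e :=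
  (continuous_const.add continuous_id).rpow_const fun _ => Or.inr he

lemma continuous_one_sub_rpow {e : ℝ} (he : 0 ≤ e) : Continuous fun y : ℝ => (1 - y) ^ e :=
  (continuous_const.sub continuous_id).rpow_const fun _ => Or.inr he

lemma two_le_one_add_rpow_add_one_sub_rpow {e x : ℝ} (he : e ≤ 0) (hx : |x| < 1) :
    2 ≤ (1 + x) ^ e + (1 - x) ^ e := by
  obtain ⟨hx₁, hx₂⟩ := abs_lt.1 hx
  have hprod : 1 ≤ (1 + x) ^ e * (1 - x) ^ e := by
    rw [← mul_rpow (by linarith) (by linarith)]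
    exact one_le_rpow_of_pos_of_le_one_of_nonpos (by nlinarith) (by nlinarith [sq_nonneg x]) he
  nlinarith [sq_nonneg ((1 + x) ^ e - (1 - x) ^ e), rpow_pos_of_pos (by linarith : 0 < 1 + x) e,
    rpow_pos_of_pos (by linarith : 0 < 1 - x) e]

lemma two_mul_mul_le_one_add_rpow_sub_one_sub_rpow {e x : ℝ} (he₀ : 0 ≤ e) (he₁ : e ≤ 1)
    (hx₀ : 0 ≤ x) (hx₁ : x ≤ 1) : 2 * e * x ≤ (1 + x) ^ e - (1 - x) ^ e := by
  let k : ℝ → ℝ := fun y => (1 + y) ^ e - (1 - y) ^ e - 2 * e * y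
  have hk : MonotoneOn k (Icc 0 1) := by
    refine monotoneOn_of_hasDerivWithinAt_nonneg (convex_Icc 0 1)
      (f' := fun y => e * ((1 + y) ^ (e - 1) + (1 - y) ^ (e - 1) - 2)) ?_ ?_ ?_
    · exact (((continuous_one_add_rpow he₀).sub (continuous_one_sub_rpow he₀)).sub
        (continuous_const.mul continuous_id)).continuousOn
    · rw [interior_Icc]
      rintro y ⟨hy₀, hy₁⟩
      refine (((hasDerivAt_one_add_rpow _ (by linarith)).sub (hasDerivAt_one_sub_rpow _ hy₁)).sub
        ((hasDerivAt_id y).const_mul _)).hasDerivWithinAt.congr_deriv ?_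
      ring
    · rw [interior_Icc]
      rintro y ⟨hy₀, hy₁⟩
      exact mul_nonneg he₀ (sub_nonneg.2 (two_le_one_add_rpow_add_one_sub_rpow
        (by linarith) (abs_lt.2 ⟨by linarith, hy₁⟩)))
  have := hk ⟨le_rfl, zero_le_one⟩ ⟨hx₀, hx₁⟩ hx₀
  simp only [k] at this
  norm_num at this
  linarith

section TwoPoint

variable {q : ℝ}

lemma two_add_mul_sq_le_one_add_rpow_add_one_sub_rpow (hq₁ : 1 ≤ q) (hq₂ : q ≤ 2) {x : ℝ}
    (hx₀ : 0 ≤ x) (hx₁ : x ≤ 1) : 2 + q * (q - 1) * x ^ 2 ≤ (1 + x) ^ q + (1 - x) ^ q := by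
  let h : ℝ → ℝ := fun y => (1 + y) ^ q + (1 - y) ^ q - q * (q - 1) * y ^ 2
  have hh : MonotoneOn h (Icc 0 1) := by
    refine monotoneOn_of_hasDerivWithinAt_nonneg (convex_Icc 0 1)
      (f' := fun y => q * ((1 + y) ^ (q - 1) - (1 - y) ^ (q - 1) - 2 * (q - 1) * y)) ?_ ?_ ?_
    · exact (((continuous_one_add_rpow (by linarith)).add
        (continuous_one_sub_rpow (by linarith))).sub (by fun_prop)).continuousOn
    · rw [interior_Icc]
      rintro y ⟨hy₀, hy₁⟩
      refine (((hasDerivAt_one_add_rpow _ (by linarith)).add (hasDerivAt_one_sub_rpow _ hy₁)).sub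
        ((hasDerivAt_pow 2 y).const_mul _)).hasDerivWithinAt.congr_deriv ?_
      ring
    · rw [interior_Icc]
      rintro y ⟨hy₀, hy₁⟩
      exact mul_nonneg (by linarith) (sub_nonneg.2 (by
        linarith [two_mul_mul_le_one_add_rpow_sub_one_sub_rpow (e := q - 1) (by linarith)
          (by linarith) hy₀.le hy₁.le]))
  have := hh ⟨le_rfl, zero_le_one⟩ ⟨hx₀, hx₁⟩ hx₀
  simp only [h] at this
  norm_num at this
  linarith

lemma two_mul_sq_add_mul_sq_rpow_le (hq₁ : 1 ≤ q) (hq₂ : q ≤ 2) {a b : ℝ} (hb : 0 ≤ b)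
    (hba : b ≤ a) : 2 * (a ^ 2 + (q - 1) * b ^ 2) ^ (q / 2) ≤ (a + b) ^ q + (a - b) ^ q := by
  obtain rfl | ha := (hb.trans hba).eq_or_lt
  · obtain rfl : b = 0 := le_antisymm hba hb
    simp [zero_rpow (by linarith : q / 2 ≠ 0), zero_rpow (by linarith : q ≠ 0)]
  set x := b / a
  have hx₀ : 0 ≤ x := div_nonneg hb ha.le
  have hx₁ : x ≤ 1 := (div_le_one ha).2 hba
  have hbernoulli : (1 + (q - 1) * x ^ 2) ^ (q / 2) ≤ 1 + q / 2 * ((q - 1) * x ^ 2) :=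
    rpow_one_add_le_one_add_mul_self (by nlinarith) (by linarith) (by linarith)
  have hlhs : (a ^ 2 + (q - 1) * b ^ 2) ^ (q / 2) = a ^ q * (1 + (q - 1) * x ^ 2) ^ (q / 2) := by
    rw [show a ^ 2 + (q - 1) * b ^ 2 = a ^ 2 * (1 + (q - 1) * x ^ 2) by simp only [x]; field_simp,
      mul_rpow (sq_nonneg a) (by nlinarith), sq_rpow_div_two, abs_of_pos ha]
  have hscale : ∀ y : ℝ, 0 ≤ y → (a * y) ^ q = a ^ q * y ^ q := fun y hy => mul_rpow ha.le hy
  have hplus : (a + b) ^ q = a ^ q * (1 + x) ^ q := by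
    rw [← hscale _ (by linarith)]; simp only [x]; field_simp
  have hminus : (a - b) ^ q = a ^ q * (1 - x) ^ q := by
    rw [← hscale _ (by linarith)]; simp only [x]; field_simp
  have haq : 0 < a ^ q := rpow_pos_of_pos ha q
  rw [hlhs, hplus, hminus]
  nlinarith [two_add_mul_sq_le_one_add_rpow_add_one_sub_rpow hq₁ hq₂ hx₀ hx₁]

lemma two_mul_sq_add_mul_sq_rpow_le_abs (hq₁ : 1 ≤ q) (hq₂ : q ≤ 2) (u d : ℝ) :
    2 * (u ^ 2 + (q - 1) * d ^ 2) ^ (q / 2) ≤ |u + d| ^ q + |u - d| ^ q := by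
  wlog hdu : |d| ≤ |u| generalizing u d
  · have hsq : u ^ 2 ≤ d ^ 2 := sq_le_sq.2 (le_of_not_ge hdu)
    calc 2 * (u ^ 2 + (q - 1) * d ^ 2) ^ (q / 2)
        ≤ 2 * (d ^ 2 + (q - 1) * u ^ 2) ^ (q / 2) := by
          gcongr 2 * ?_
          exact rpow_le_rpow (by nlinarith [sq_nonneg u]) (by nlinarith) (by linarith)
      _ ≤ |d + u| ^ q + |d - u| ^ q := this d u (le_of_not_ge hdu)
      _ = |u + d| ^ q + |u - d| ^ q := by rw [add_comm d, abs_sub_comm]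
  wlog hu : 0 ≤ u generalizing u d
  · have := this (-u) (-d) (by simpa using hdu) (by linarith)
    rwa [neg_sq, neg_sq, ← neg_add, ← neg_sub', abs_neg, abs_neg] at this
  wlog hd : 0 ≤ d generalizing d
  · have := this (-d) (by simpa using hdu) (by linarith)
    rwa [neg_sq, ← sub_eq_add_neg, sub_neg_eq_add, add_comm (|u - d| ^ q)] at this
  rw [abs_of_nonneg hu, abs_of_nonneg hd] at hdu
  rw [abs_of_nonneg (by linarith), abs_of_nonneg (by linarith)]
  exact two_mul_sq_add_mul_sq_rpow_le hq₁ hq₂ hd hdu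

end TwoPoint

lemma rpow_mul_rpow_add_rpow_mul_rpow_le {s A B x y : ℝ} (hs₀ : 0 < s) (hs₁ : s ≤ 1)
    (hA : 0 ≤ A) (hB : 0 ≤ B) (hAB : 0 < A + B) (hx : 0 ≤ x) (hy : 0 ≤ y) :
    A ^ (1 - s) * x ^ s + B ^ (1 - s) * y ^ s ≤ (A + B) ^ (1 - s) * (x + y) ^ s := by
  obtain hxy | hxy := (add_nonneg hx hy).eq_or_lt
  · obtain rfl : x = 0 := by linarith
    obtain rfl : y = 0 := by linarith
    simp [zero_rpow hs₀.ne']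
  have hmean : ∀ a b, 0 ≤ a → 0 ≤ b →
      a ^ (1 - s) * b ^ s = (A + B) ^ (1 - s) * (x + y) ^ s *
        ((a / (A + B)) ^ (1 - s) * (b / (x + y)) ^ s) := by
    intro a b ha hb
    rw [div_rpow ha hAB.le, div_rpow hb hxy.le]
    field_simp
  have amgm : ∀ a b, 0 ≤ a → 0 ≤ b → (a / (A + B)) ^ (1 - s) * (b / (x + y)) ^ s ≤
      (1 - s) * (a / (A + B)) + s * (b / (x + y)) := fun a b ha hb =>
    geom_mean_le_arith_mean2_weighted (by linarith) hs₀.le (by positivity) (by positivity)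
      (by ring)
  rw [hmean A x hA hx, hmean B y hB hy, ← mul_add]
  refine mul_le_of_le_one_right (by positivity) ?_
  calc _ ≤ (1 - s) * (A / (A + B)) + s * (x / (x + y)) +
        ((1 - s) * (B / (A + B)) + s * (y / (x + y))) :=
        add_le_add (amgm A x hA hx) (amgm B y hB hy)
    _ = 1 := by field_simp; ring

lemma reverse_Lp_add_le_tsum_of_nonneg {ι : Type*} {s : ℝ} (hs₀ : 0 < s) (hs₁ : s ≤ 1)
    {f g : ι → ℝ} (hf : ∀ i, 0 ≤ f i) (hg : ∀ i, 0 ≤ g i)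
    (hf_sum : Summable fun i => f i ^ s) (hg_sum : Summable fun i => g i ^ s) :
    (∑' i, f i ^ s) ^ (1 / s) + (∑' i, g i ^ s) ^ (1 / s) ≤
      (∑' i, (f i + g i) ^ s) ^ (1 / s) := by
  have hfg_sum : Summable fun i => (f i + g i) ^ s :=
    (hf_sum.add hg_sum).of_nonneg_of_le (fun i => rpow_nonneg (add_nonneg (hf i) (hg i)) s)
      fun i => rpow_add_le_add_rpow (hf i) (hg i) hs₀.le hs₁
  set A := (∑' i, f i ^ s) ^ (1 / s)
  set B := (∑' i, g i ^ s) ^ (1 / s)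
  have hA : 0 ≤ A := rpow_nonneg (tsum_nonneg fun i => rpow_nonneg (hf i) s) _
  have hB : 0 ≤ B := rpow_nonneg (tsum_nonneg fun i => rpow_nonneg (hg i) s) _
  have hS : 0 ≤ ∑' i, (f i + g i) ^ s :=
    tsum_nonneg fun i => rpow_nonneg (add_nonneg (hf i) (hg i)) s
  obtain hAB | hAB := (add_nonneg hA hB).eq_or_lt
  · rw [← hAB]; exact rpow_nonneg hS _
  have hpow : ∀ {h : ι → ℝ}, (∀ i, 0 ≤ h i) →
      ((∑' i, h i ^ s) ^ (1 / s)) ^ (1 - s) * ∑' i, h i ^ s = (∑' i, h i ^ s) ^ (1 / s) := by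
    intro h hh
    have hsum : 0 ≤ ∑' i, h i ^ s := tsum_nonneg fun i => rpow_nonneg (hh i) s
    nth_rw 2 [← rpow_inv_rpow hsum hs₀.ne']
    rw [one_div, ← rpow_add' (rpow_nonneg hsum _) (by simp)]
    simp
  have hmain : (A + B) ^ (1 - s) * (A + B) ^ s ≤ (A + B) ^ (1 - s) * ∑' i, (f i + g i) ^ s := by
    calc (A + B) ^ (1 - s) * (A + B) ^ s = A + B := by
          rw [← rpow_add hAB]; simp
      _ = A ^ (1 - s) * ∑' i, f i ^ s + B ^ (1 - s) * ∑' i, g i ^ s := by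
          rw [hpow hf, hpow hg]
      _ = ∑' i, (A ^ (1 - s) * f i ^ s + B ^ (1 - s) * g i ^ s) := by
          rw [Summable.tsum_add (hf_sum.mul_left _) (hg_sum.mul_left _), tsum_mul_left,
            tsum_mul_left]
      _ ≤ ∑' i, (A + B) ^ (1 - s) * (f i + g i) ^ s :=
          Summable.tsum_le_tsum
            (fun i => rpow_mul_rpow_add_rpow_mul_rpow_le hs₀ hs₁ hA hB hAB (hf i) (hg i))
            ((hf_sum.mul_left _).add (hg_sum.mul_left _)) (hfg_sum.mul_left _)
      _ = (A + B) ^ (1 - s) * ∑' i, (f i + g i) ^ s := tsum_mul_left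
  have hle := le_of_mul_le_mul_left hmain (rpow_pos_of_pos hAB _)
  calc A + B = ((A + B) ^ s) ^ (1 / s) := by
        rw [← rpow_mul hAB.le, mul_one_div_cancel hs₀.ne', rpow_one]
    _ ≤ _ := rpow_le_rpow (rpow_nonneg hAB.le _) hle (by positivity)

lemma add_div_two_rpow_le {x y r : ℝ} (hx : 0 ≤ x) (hy : 0 ≤ y) (hr : 1 ≤ r) :
    ((x + y) / 2) ^ r ≤ (x ^ r + y ^ r) / 2 := by
  have := (convexOn_rpow hr).2 hx hy (by norm_num : (0 : ℝ) ≤ 1 / 2)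
    (by norm_num : (0 : ℝ) ≤ 1 / 2) (by norm_num)
  simp only [smul_eq_mul] at this
  calc ((x + y) / 2) ^ r = (1 / 2 * x + 1 / 2 * y) ^ r := by ring_nf
    _ ≤ 1 / 2 * x ^ r + 1 / 2 * y ^ r := this
    _ = (x ^ r + y ^ r) / 2 := by ring

namespace lp

variable {ι : Type*} {p : ℝ≥0∞}

lemma summable_sq_rpow (hp : 0 < p.toReal) (x : lp (fun _ : ι => ℝ) p) :
    Summable fun i => (x i ^ 2) ^ (p.toReal / 2) := by
  simpa only [sq_rpow_div_two, Real.norm_eq_abs] using (lp.memℓp x).summable hp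

lemma sq_norm_eq_tsum (hp : 0 < p.toReal) (x : lp (fun _ : ι => ℝ) p) :
    ‖x‖ ^ 2 = (∑' i, (x i ^ 2) ^ (p.toReal / 2)) ^ (1 / (p.toReal / 2)) := by
  rw [norm_eq_tsum_rpow hp, ← rpow_natCast,
    ← rpow_mul (tsum_nonneg fun i => rpow_nonneg (norm_nonneg _) _)]
  simp only [sq_rpow_div_two, Real.norm_eq_abs]
  congr 1
  field_simp
  norm_num

lemma sq_norm_add_mul_sq_norm_le_tsum (hp₀ : 0 < p.toReal) (hp₂ : p.toReal ≤ 2) {c : ℝ}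
    (hc : 0 ≤ c) (u d : lp (fun _ : ι => ℝ) p) :
    ‖u‖ ^ 2 + c * ‖d‖ ^ 2 ≤
      (∑' i, (u i ^ 2 + c * d i ^ 2) ^ (p.toReal / 2)) ^ (1 / (p.toReal / 2)) := by
  set s := p.toReal / 2
  have hs₀ : 0 < s := by positivity
  have hs₁ : s ≤ 1 := by simp only [s]; linarith
  have hd_sum : Summable fun i => (c * d i ^ 2) ^ s := by
    simpa only [mul_rpow hc (sq_nonneg _)] using (summable_sq_rpow hp₀ d).mul_left (c ^ s)
  have hd_norm : c * ‖d‖ ^ 2 = (∑' i, (c * d i ^ 2) ^ s) ^ (1 / s) := by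
    simp only [mul_rpow hc (sq_nonneg _), tsum_mul_left]
    rw [mul_rpow (rpow_nonneg hc _) (tsum_nonneg fun i => rpow_nonneg (sq_nonneg _) _),
      ← rpow_mul hc, mul_one_div_cancel hs₀.ne', rpow_one, sq_norm_eq_tsum hp₀]
  rw [sq_norm_eq_tsum hp₀, hd_norm]
  exact reverse_Lp_add_le_tsum_of_nonneg hs₀ hs₁ (fun i => sq_nonneg _)
    (fun i => mul_nonneg hc (sq_nonneg _)) (summable_sq_rpow hp₀ u) hd_sum

lemma two_mul_tsum_sq_add_mul_sq_rpow_le (hp₁ : 1 ≤ p.toReal) (hp₂ : p.toReal ≤ 2)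
    (u d : lp (fun _ : ι => ℝ) p) :
    2 * ∑' i, (u i ^ 2 + (p.toReal - 1) * d i ^ 2) ^ (p.toReal / 2) ≤
      ∑' i, ((u + d) i ^ 2) ^ (p.toReal / 2) + ∑' i, ((u - d) i ^ 2) ^ (p.toReal / 2) := by
  have hplus := summable_sq_rpow (by linarith) (u + d)
  have hminus := summable_sq_rpow (by linarith) (u - d)
  have hpointwise : ∀ i, 2 * (u i ^ 2 + (p.toReal - 1) * d i ^ 2) ^ (p.toReal / 2) ≤
      ((u + d) i ^ 2) ^ (p.toReal / 2) + ((u - d) i ^ 2) ^ (p.toReal / 2) := by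
    intro i
    rw [coeFn_add, coeFn_sub, Pi.add_apply, Pi.sub_apply, sq_rpow_div_two, sq_rpow_div_two]
    exact two_mul_sq_add_mul_sq_rpow_le_abs hp₁ hp₂ (u i) (d i)
  rw [← tsum_mul_left, ← Summable.tsum_add hplus hminus]
  exact Summable.tsum_le_tsum hpointwise
    ((hplus.add hminus).of_nonneg_of_le (fun i => by positivity) hpointwise) (hplus.add hminus)

theorem ball_carlen_lieb [Fact (1 ≤ p)] (hp : p ≤ 2)
    (u d : lp (fun _ : ι => ℝ) p) :
    2 * ‖u‖ ^ 2 + 2 * (p.toReal - 1) * ‖d‖ ^ 2 ≤ ‖u + d‖ ^ 2 + ‖u - d‖ ^ 2 := by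
  have hp_top : p ≠ ⊤ := (hp.trans_lt ENNReal.ofNat_lt_top).ne
  have hq₁ : 1 ≤ p.toReal := by
    simpa using (ENNReal.toReal_le_toReal ENNReal.one_ne_top hp_top).2 (Fact.out : 1 ≤ p)
  have hq₂ : p.toReal ≤ 2 := by
    simpa using (ENNReal.toReal_le_toReal hp_top ENNReal.ofNat_ne_top).2 hp
  have hq₀ : 0 < p.toReal := by linarith
  have hr : 1 ≤ 1 / (p.toReal / 2) := by rw [le_div_iff₀ (by positivity)]; linarith
  suffices ‖u‖ ^ 2 + (p.toReal - 1) * ‖d‖ ^ 2 ≤ (‖u + d‖ ^ 2 + ‖u - d‖ ^ 2) / 2 by linarith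
  calc ‖u‖ ^ 2 + (p.toReal - 1) * ‖d‖ ^ 2
      ≤ (∑' i, (u i ^ 2 + (p.toReal - 1) * d i ^ 2) ^ (p.toReal / 2)) ^ (1 / (p.toReal / 2)) :=
        sq_norm_add_mul_sq_norm_le_tsum hq₀ hq₂ (by linarith) u d
    _ ≤ ((∑' i, ((u + d) i ^ 2) ^ (p.toReal / 2) +
          ∑' i, ((u - d) i ^ 2) ^ (p.toReal / 2)) / 2) ^ (1 / (p.toReal / 2)) := by
        refine rpow_le_rpow (tsum_nonneg fun i => ?_) ?_ (by positivity)
        · exact rpow_nonneg (by nlinarith) _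
        · linarith [two_mul_tsum_sq_add_mul_sq_rpow_le hq₁ hq₂ u d]
    _ ≤ (‖u + d‖ ^ 2 + ‖u - d‖ ^ 2) / 2 := by
        rw [sq_norm_eq_tsum hq₀, sq_norm_eq_tsum hq₀]
        exact add_div_two_rpow_le (tsum_nonneg fun i => by positivity)
          (tsum_nonneg fun i => by positivity) hr

end lp

lemma nonneg_on_dyadic_of_midpoint_concave {g : ℝ → ℝ}
    (hmid : ∀ x y, (g x + g y) / 2 ≤ g ((x + y) / 2)) (h₀ : 0 ≤ g 0) (h₁ : 0 ≤ g 1) :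
    ∀ n k : ℕ, k ≤ 2 ^ n → 0 ≤ g (k / 2 ^ n) := by
  intro n
  induction n with
  | zero =>
    intro k hk
    interval_cases k <;> simpa
  | succ n ih =>
    intro k hk
    obtain ⟨m, rfl | rfl⟩ := Nat.even_or_odd' k
    · convert ih m (by omega) using 2
      push_cast
      ring
    · have hmid' := hmid (m / 2 ^ n) ((m + 1 : ℕ) / 2 ^ n)
      have hcenter : ((m : ℝ) / 2 ^ n + (m + 1 : ℕ) / 2 ^ n) / 2 =
          (2 * m + 1 : ℕ) / 2 ^ (n + 1) := by
        push_cast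
        ring
      rw [hcenter] at hmid'
      linarith [ih m (by omega), ih (m + 1) (by omega)]

lemma nonneg_of_midpoint_concave {g : ℝ → ℝ} (hg : Continuous g)
    (hmid : ∀ x y, (g x + g y) / 2 ≤ g ((x + y) / 2)) (h₀ : 0 ≤ g 0) (h₁ : 0 ≤ g 1) {t : ℝ}
    (ht : t ∈ Icc (0 : ℝ) 1) : 0 ≤ g t := by
  have hdyadic : Tendsto (fun n : ℕ => (⌊t * 2 ^ n⌋₊ : ℝ) / 2 ^ n) atTop (𝓝 t) :=
    (tendsto_nat_floor_mul_div_atTop ht.1).comp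
      (tendsto_pow_atTop_atTop_of_one_lt one_lt_two)
  refine ge_of_tendsto ((hg.tendsto t).comp hdyadic) (Eventually.of_forall fun n => ?_)
  refine nonneg_on_dyadic_of_midpoint_concave hmid h₀ h₁ n _ (Nat.floor_le_of_le ?_)
  push_cast
  nlinarith [ht.2, pow_pos (two_pos : (0 : ℝ) < 2) n]

lemma convexOn_univ_of_midpoint {f : ℝ → ℝ} (hf : Continuous f)
    (hmid : ∀ x y, f ((x + y) / 2) ≤ (f x + f y) / 2) : ConvexOn ℝ univ f := by
  refine ⟨convex_univ, fun x _ y _ a b ha hb hab => ?_⟩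
  obtain rfl : a = 1 - b := by linarith
  let g : ℝ → ℝ := fun t => (1 - t) * f x + t * f y - f ((1 - t) * x + t * y)
  have hg : Continuous g := by fun_prop
  have hgmid : ∀ s t, (g s + g t) / 2 ≤ g ((s + t) / 2) := by
    intro s t
    have := hmid ((1 - s) * x + s * y) ((1 - t) * x + t * y)
    simp only [g]
    rw [show (1 - (s + t) / 2) * x + (s + t) / 2 * y =
      ((1 - s) * x + s * y + ((1 - t) * x + t * y)) / 2 by ring]
    linarith
  have := nonneg_of_midpoint_concave hg hgmid (by simp [g]) (by simp [g]) ⟨hb, by linarith⟩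
  simp only [g, smul_eq_mul] at this ⊢
  linarith

lemma sq_norm_smul_add_one_sub_smul_le {E : Type*} [SeminormedAddCommGroup E] [NormedSpace ℝ E]
    {κ : ℝ} (hE : ∀ u d : E, 2 * ‖u‖ ^ 2 + 2 * κ * ‖d‖ ^ 2 ≤ ‖u + d‖ ^ 2 + ‖u - d‖ ^ 2)
    (v w : E) {t : ℝ} (ht : t ∈ Icc (0 : ℝ) 1) :
    ‖t • v + (1 - t) • w‖ ^ 2 ≤
      t * ‖v‖ ^ 2 + (1 - t) * ‖w‖ ^ 2 - κ * t * (1 - t) * ‖v - w‖ ^ 2 := by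
  let z : ℝ → E := fun s => s • v + (1 - s) • w
  let φ : ℝ → ℝ := fun s => ‖z s‖ ^ 2 - κ * ‖v - w‖ ^ 2 * s ^ 2
  have hφ : ConvexOn ℝ univ φ := by
    refine convexOn_univ_of_midpoint (by fun_prop) fun s r => ?_
    have hmid := hE ((2⁻¹ : ℝ) • (z s + z r)) ((2⁻¹ : ℝ) • (z s - z r))
    have hplus : (2⁻¹ : ℝ) • (z s + z r) + (2⁻¹ : ℝ) • (z s - z r) = z s := by module
    have hminus : (2⁻¹ : ℝ) • (z s + z r) - (2⁻¹ : ℝ) • (z s - z r) = z r := by module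
    have hcenter : (2⁻¹ : ℝ) • (z s + z r) = z ((s + r) / 2) := by simp only [z]; module
    have hdiff : (2⁻¹ : ℝ) • (z s - z r) = ((s - r) / 2) • (v - w) := by simp only [z]; module
    rw [hplus, hminus, hcenter, hdiff, norm_smul, mul_pow, Real.norm_eq_abs, sq_abs] at hmid
    simp only [φ]
    linarith
  have := hφ.2 (mem_univ 1) (mem_univ 0) ht.1 (sub_nonneg.2 ht.2) (add_sub_cancel t 1)
  simp only [φ, z, smul_eq_mul, one_smul, zero_smul, sub_self, sub_zero, add_zero, zero_add,
    mul_one, mul_zero] at this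
  linarith

theorem bcl_convex_combination_general (p : ℝ≥0∞) [Fact (1 ≤ p)] (hp2 : p ≤ 2)
    (t : ℝ) (ht : t ∈ Set.Ioo (0 : ℝ) 1) :
    ∀ v w : lp (fun _ : ℕ => ℝ) p,
      ‖t • v + (1 - t) • w‖ ^ 2 ≤
        t * ‖v‖ ^ 2 + (1 - t) * ‖w‖ ^ 2
          - (p.toReal - 1) * t * (1 - t) * ‖v - w‖ ^ 2 := by
  intro v w
  exact sq_norm_smul_add_one_sub_smul_le (E := lp (fun _ : ℕ => ℝ) p)
    (lp.ball_carlen_lieb hp2) v w (Set.Ioo_subset_Icc_self ht)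

/-- For `p ∈ (1,2]` and `t ∈ (0,1)`, for all `v w ∈ ℓ^p`,
`‖t•v + (1-t)•w‖_p² ≤ t‖v‖_p² + (1-t)‖w‖_p² − (p−1)·t·(1−t)·‖v−w‖_p²`. -/
theorem bcl_convex_combination (p : ℝ≥0∞) [Fact (1 ≤ p)] (hp1 : 1 < p) (hp2 : p ≤ 2)
    (t : ℝ) (ht : t ∈ Set.Ioo (0 : ℝ) 1) :
    ∀ v w : lp (fun _ : ℕ => ℝ) p,
      ‖t • v + (1 - t) • w‖ ^ 2 ≤
        t * ‖v‖ ^ 2 + (1 - t) * ‖w‖ ^ 2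
          - (p.toReal - 1) * t * (1 - t) * ‖v - w‖ ^ 2 :=
  bcl_convex_combination_general p hp2 t ht
end

section
/- Let 0 < l < j < 3j < k. Define curves μ, ν : [0,1] → ℝ²-multiset-space by μ(t) = {((k/2)t, (k/2)(2−t)), ((j/2)(3t), (j/2)(2−3t))} for t ∈ [0,1/3] and μ(t) = {((k/2)t, (k/2)(2−t))} for t ∈ [1/3,1], and ν analogously with l in place of j. Then μ and ν are geodesics from Y = {(0,k),(0,j)} and Z = {(0,k),(0,l)} respectively to the empty diagram in (D_∞[l^q], d_∞[l^q]) for every q ∈ [1,∞], they agree on [1/3, 1], and they differ on [0,1/3); hence d_∞[l^q] admits branching geodesics. -/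
open scoped ENNReal
open Set

noncomputable section

/-- The `q`-norm on `ℝ²`, for `q ∈ [1,∞]` (encoded as `q : ℝ≥0∞`). -/
def qnorm (q : ℝ≥0∞) (v : ℝ × ℝ) : ℝ :=
  if q = ∞ then max |v.1| |v.2|
  else (|v.1| ^ q.toReal + |v.2| ^ q.toReal) ^ (1 / q.toReal)

/-- The diagonal of `ℝ²`, counted with countably infinite multiplicity
(one copy for each index in `ℕ`). -/
def diagSet : Set ((ℝ × ℝ) × ℕ) := {x | x.1.1 = x.1.2}

/-- A persistence diagram: a subset of `ℝ² × ℕ` containing every copy of the diagonal,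
all of whose points lie on or above the diagonal, and with countably many
off-diagonal points. -/
structure Diagram where
  pts : Set ((ℝ × ℝ) × ℕ)
  diag_mem : diagSet ⊆ pts
  above : ∀ x ∈ pts, x.1.1 ≤ x.1.2
  countable_off : {x ∈ pts | x.1.1 < x.1.2}.Countable

/-- The empty diagram: only the diagonal, with countably infinite multiplicity. -/
def emptyD : Diagram where
  pts := diagSet
  diag_mem := le_refl _
  above := fun x hx => le_of_eq hx
  countable_off := Set.countable_empty.mono
    (fun _ hx => absurd hx.2 (not_lt.mpr (le_of_eq hx.1.symm)))

/-- The `l^p[l^q]` cost of a bijection between two persistence diagrams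
(only the geometric component of each point is used). -/
def cost (p q : ℝ≥0∞) {X Y : Diagram} (φ : X.pts ≃ Y.pts) : ℝ≥0∞ :=
  if p = ∞ then
    ⨆ x : X.pts, ENNReal.ofReal (qnorm q ((x : (ℝ × ℝ) × ℕ).1 - ((φ x : (ℝ × ℝ) × ℕ)).1))
  else
    (∑' x : X.pts,
      ENNReal.ofReal (qnorm q ((x : (ℝ × ℝ) × ℕ).1 - ((φ x : (ℝ × ℝ) × ℕ)).1)) ^ p.toReal)
      ^ (1 / p.toReal)

/-- The `l^p[l^q]` matching distance `d_p[l^q]` between persistence diagrams. -/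
def pdist (p q : ℝ≥0∞) (X Y : Diagram) : ℝ≥0∞ :=
  ⨅ φ : X.pts ≃ Y.pts, cost p q φ

/-- The time-`t` slice of the convex-combination curve induced by a bijection `φ`:
each point `x` moves along the straight line to `φ x`, keeping its index. -/
def convComb {X Y : Diagram} (φ : X.pts ≃ Y.pts) (t : ℝ) : Set ((ℝ × ℝ) × ℕ) :=
  (fun x : X.pts =>
    ((1 - t) • (x : (ℝ × ℝ) × ℕ).1 + t • ((φ x : (ℝ × ℝ) × ℕ)).1,
     (x : (ℝ × ℝ) × ℕ).2)) '' Set.univ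

end

/-!
Matchings are built point by point. Every off-diagonal point of these curves slides in the
direction `(1, -1)`, so each displacement is a multiple of `(1, -1)`; a point that reaches the
diagonal is absorbed by shifting indices along the column of its landing point (the diagonal has
infinite multiplicity). This bounds `d(ρ s, ρ t)` above by `|t - s| · (k / 2) · ‖(1, -1)‖_q`.
Conversely `‖v - w‖_q ≥ ‖(1, -1)‖_q · |pers v - pers w| / 2`, since `v - v.swap` is a multiple of
`(1, -1)`; the `k`-point of `ρ s` has persistence `k (1 - s)` while every point of `ρ t` has
persistence at most `k (1 - t)`, which gives the matching lower bound. The same estimate separates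
the `j`-point of `μ t` from every point of `ν t` when `t < 1/3`.
-/

lemma qnorm_swap (q : ℝ≥0∞) (v : ℝ × ℝ) : qnorm q v.swap = qnorm q v := by
  simp [qnorm, max_comm, add_comm]

section QNorm

variable {q : ℝ≥0∞} [Fact (1 ≤ q)]

lemma qnorm_eq_norm (v : ℝ × ℝ) : qnorm q v = ‖WithLp.toLp q v‖ := by
  have hq0 : q ≠ 0 := (zero_lt_one.trans_le (Fact.out : 1 ≤ q)).ne'
  show _ = if _ then _ else if _ then _ else _
  simp [qnorm, hq0, Real.norm_eq_abs]

lemma qnorm_smul (c : ℝ) (v : ℝ × ℝ) : qnorm q (c • v) = |c| * qnorm q v := by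
  rw [qnorm_eq_norm, qnorm_eq_norm, WithLp.toLp_smul, norm_smul, Real.norm_eq_abs]

lemma qnorm_sub_le (v w : ℝ × ℝ) : qnorm q (v - w) ≤ qnorm q v + qnorm q w := by
  simpa only [qnorm_eq_norm, WithLp.toLp_sub] using norm_sub_le _ _

lemma qnorm_sub_comm (v w : ℝ × ℝ) : qnorm q (v - w) = qnorm q (w - v) := by
  simp only [qnorm_eq_norm, WithLp.toLp_sub, norm_sub_rev]

@[simp] lemma qnorm_zero : qnorm q 0 = 0 := by
  simp [qnorm_eq_norm]

lemma qnorm_one_neg_one_pos : 0 < qnorm q (1, -1) := by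
  rw [qnorm_eq_norm, norm_pos_iff]
  simp [WithLp.toLp_eq_zero]

lemma qnorm_sub_of_add_eq {v w : ℝ × ℝ} (h : v.1 + v.2 = w.1 + w.2) :
    qnorm q (v - w) = |v.1 - w.1| * qnorm q (1, -1) := by
  rw [← qnorm_smul]
  congr 1
  ext <;> simp; linarith

lemma qnorm_sub_le_of_add_eq {v w : ℝ × ℝ} {D : ℝ}
    (h : v.1 + v.2 = w.1 + w.2) (hD : |v.1 - w.1| ≤ D) :
    qnorm q (v - w) ≤ D * qnorm q (1, -1) := by
  rw [qnorm_sub_of_add_eq h]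
  exact mul_le_mul_of_nonneg_right hD qnorm_one_neg_one_pos.le

def pers (v : ℝ × ℝ) : ℝ := v.2 - v.1

lemma abs_pers_mul_le (v : ℝ × ℝ) : |pers v| * qnorm q (1, -1) ≤ 2 * qnorm q v := by
  have hsum : v.1 + v.2 = v.swap.1 + v.swap.2 := add_comm _ _
  calc |pers v| * qnorm q (1, -1) = qnorm q (v - v.swap) := by
        rw [qnorm_sub_of_add_eq hsum, pers, abs_sub_comm]; rfl
    _ ≤ qnorm q v + qnorm q v.swap := qnorm_sub_le _ _
    _ = 2 * qnorm q v := by rw [qnorm_swap]; ring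

lemma abs_sub_pers_mul_le (v w : ℝ × ℝ) :
    |pers v - pers w| * qnorm q (1, -1) ≤ 2 * qnorm q (v - w) := by
  have : pers v - pers w = pers (v - w) := by simp only [pers, Prod.fst_sub, Prod.snd_sub]; ring
  rw [this]
  exact abs_pers_mul_le _

end QNorm

lemma cost_top {q : ℝ≥0∞} {X Y : Diagram} (φ : X.pts ≃ Y.pts) :
    cost ∞ q φ = ⨆ x : X.pts,
      ENNReal.ofReal (qnorm q ((x : (ℝ × ℝ) × ℕ).1 - ((φ x : (ℝ × ℝ) × ℕ)).1)) :=
  if_pos rfl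

def MatchableWithin (q : ℝ≥0∞) (B : ℝ) (S T : Set ((ℝ × ℝ) × ℕ)) : Prop :=
  ∃ f : (ℝ × ℝ) × ℕ → (ℝ × ℝ) × ℕ, BijOn f S T ∧ ∀ x ∈ S, qnorm q (x.1 - (f x).1) ≤ B

lemma matchableWithin_refl {q : ℝ≥0∞} [Fact (1 ≤ q)] {B : ℝ} (hB : 0 ≤ B)
    (S : Set ((ℝ × ℝ) × ℕ)) : MatchableWithin q B S S :=
  ⟨id, bijOn_id S, fun x _ => by simpa using hB⟩

-- Hilbert's hotel on the column `{z} × ℕ`: it frees the slot `(z, 0)`.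
noncomputable def shiftColumn (z : ℝ × ℝ) (x : (ℝ × ℝ) × ℕ) : (ℝ × ℝ) × ℕ :=
  if x.1 = z then (z, x.2 + 1) else x

lemma shiftColumn_fst (z : ℝ × ℝ) (x : (ℝ × ℝ) × ℕ) : (shiftColumn z x).1 = x.1 := by
  unfold shiftColumn; split_ifs with h <;> simp [h]

lemma bijOn_shiftColumn {z : ℝ × ℝ} {T : Set ((ℝ × ℝ) × ℕ)} (hz : ∀ n, (z, n) ∈ T) :
    BijOn (shiftColumn z) T (T \ {(z, 0)}) := by
  refine ⟨fun x hx => ?_, fun x _ y _ hxy => ?_, fun y hy => ?_⟩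
  · unfold shiftColumn
    split_ifs with h
    · exact ⟨hz _, by simp⟩
    · exact ⟨hx, fun hx0 => h (by rw [hx0])⟩
  · have h1 : x.1 = y.1 := by rw [← shiftColumn_fst z x, hxy, shiftColumn_fst]
    unfold shiftColumn at hxy
    by_cases hx : x.1 = z
    · rw [if_pos hx, if_pos (h1 ▸ hx)] at hxy
      exact Prod.ext h1 (by simpa using hxy)
    · rwa [if_neg hx, if_neg (h1 ▸ hx)] at hxy
  · obtain ⟨hyT, hy0⟩ := hy
    by_cases hyz : y.1 = z
    · obtain ⟨n, hn⟩ := Nat.exists_eq_succ_of_ne_zero fun h0 => hy0 (Prod.ext hyz h0)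
      refine ⟨(z, n), hz n, ?_⟩
      rw [shiftColumn, if_pos rfl]
      exact Prod.ext hyz.symm hn.symm
    · exact ⟨y, hyT, by simp [shiftColumn, hyz]⟩

namespace MatchableWithin

variable {q : ℝ≥0∞} {B : ℝ} {S T : Set ((ℝ × ℝ) × ℕ)}

lemma extend (h : MatchableWithin q B S T) {a b : (ℝ × ℝ) × ℕ} (ha : a ∉ S) (hb : b ∉ T)
    (hab : qnorm q (a.1 - b.1) ≤ B) : MatchableWithin q B (insert a S) (insert b T) := by
  obtain ⟨f, hf, hfB⟩ := h
  have hfS : EqOn (Function.update f a b) f S := fun x hx => by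
    rw [Function.update_of_ne (ne_of_mem_of_not_mem hx ha)]
  refine ⟨Function.update f a b, ?_, ?_⟩
  · simpa using (hf.congr hfS.symm).insert (a := a) (by simpa using hb)
  · rintro x (rfl | hx)
    · simpa using hab
    · rw [hfS hx]; exact hfB x hx

lemma shiftColumn (h : MatchableWithin q B S T) {z : ℝ × ℝ} (hz : ∀ n, (z, n) ∈ T) :
    MatchableWithin q B S (T \ {(z, 0)}) := by
  obtain ⟨f, hf, hfB⟩ := h
  exact ⟨_ ∘ f, (bijOn_shiftColumn hz).comp hf, fun x hx => by
    simpa only [Function.comp_apply, shiftColumn_fst] using hfB x hx⟩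

lemma absorb (h : MatchableWithin q B S T) {a : (ℝ × ℝ) × ℕ} {z : ℝ × ℝ}
    (ha : a ∉ S) (hz : ∀ n, (z, n) ∈ T) (hab : qnorm q (a.1 - z) ≤ B) :
    MatchableWithin q B (insert a S) T := by
  simpa [insert_eq_of_mem (hz 0)] using (h.shiftColumn hz).extend ha (b := (z, 0)) (by simp) hab

lemma extend_of_diagSet_subset (h : MatchableWithin q B S T) {a b : (ℝ × ℝ) × ℕ} (ha : a ∉ S)
    (hT : diagSet ⊆ T) (hb : b ∈ T → b ∈ diagSet) (hab : qnorm q (a.1 - b.1) ≤ B) :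
    MatchableWithin q B (insert a S) (insert b T) := by
  by_cases hbd : b ∈ diagSet
  · rw [insert_eq_of_mem (hT hbd)]
    exact h.absorb ha (fun n => hT (show (b.1, n) ∈ diagSet from hbd)) hab
  · exact h.extend ha (mt hb hbd) hab

end MatchableWithin

lemma matchableWithin_insert_insert_diagSet {q : ℝ≥0∞} [Fact (1 ≤ q)] {B : ℝ}
    {a₁ a₂ b₁ b₂ : (ℝ × ℝ) × ℕ} (ha₁ : a₁ ∉ diagSet) (ha₂ : a₂ ∉ diagSet)
    (ha : a₁.2 ≠ a₂.2) (hb : b₁.2 ≠ b₂.2) (hB : 0 ≤ B)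
    (h₁ : qnorm q (a₁.1 - b₁.1) ≤ B) (h₂ : qnorm q (a₂.1 - b₂.1) ≤ B) :
    MatchableWithin q B (insert a₁ (insert a₂ diagSet)) (insert b₁ (insert b₂ diagSet)) := by
  have ha₁' : a₁ ∉ insert a₂ diagSet := by
    rintro (h | h)
    · exact ha (congrArg Prod.snd h)
    · exact ha₁ h
  have hb₁ : b₁ ∈ insert b₂ diagSet → b₁ ∈ diagSet :=
    fun h => (mem_insert_iff.1 h).resolve_left fun h => hb (congrArg Prod.snd h)
  exact ((matchableWithin_refl hB diagSet).extend_of_diagSet_subset ha₂ subset_rfl id h₂)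
    |>.extend_of_diagSet_subset ha₁' (subset_insert _ _) hb₁ h₁

section Pdist

variable {q : ℝ≥0∞} {X Y : Diagram}

lemma MatchableWithin.pdist_le {B : ℝ} (h : MatchableWithin q B X.pts Y.pts) :
    pdist ∞ q X Y ≤ ENNReal.ofReal B := by
  obtain ⟨f, hf, hfB⟩ := h
  refine (iInf_le _ hf.equiv).trans ?_
  rw [cost_top]
  exact iSup_le fun x => ENNReal.ofReal_le_ofReal (hfB x x.2)

lemma le_pdist_of_forall_le {B : ℝ} {x₀ : (ℝ × ℝ) × ℕ} (hx₀ : x₀ ∈ X.pts)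
    (h : ∀ y ∈ Y.pts, B ≤ qnorm q (x₀.1 - y.1)) : ENNReal.ofReal B ≤ pdist ∞ q X Y := by
  refine le_iInf fun φ => ?_
  rw [cost_top]
  exact (ENNReal.ofReal_le_ofReal (h _ (φ ⟨x₀, hx₀⟩).2)).trans
    (le_iSup (fun x : X.pts => ENNReal.ofReal _) ⟨x₀, hx₀⟩)

lemma le_pdist_of_forall_le_abs_sub_pers [Fact (1 ≤ q)] {δ : ℝ} {x₀ : (ℝ × ℝ) × ℕ}
    (hx₀ : x₀ ∈ X.pts) (h : ∀ y ∈ Y.pts, δ ≤ |pers x₀.1 - pers y.1|) :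
    ENNReal.ofReal (δ * qnorm q (1, -1) / 2) ≤ pdist ∞ q X Y :=
  le_pdist_of_forall_le hx₀ fun y hy => by
    have := abs_sub_pers_mul_le (q := q) x₀.1 y.1
    have := mul_le_mul_of_nonneg_right (h y hy) (qnorm_one_neg_one_pos (q := q)).le
    linarith

lemma pdist_comm [Fact (1 ≤ q)] (X Y : Diagram) : pdist ∞ q X Y = pdist ∞ q Y X := by
  have key : ∀ X Y : Diagram, pdist ∞ q Y X ≤ pdist ∞ q X Y := fun X Y =>
    le_iInf fun φ => (iInf_le _ φ.symm).trans_eq <| by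
      rw [cost_top, cost_top, ← φ.iSup_comp]
      simp only [Equiv.symm_apply_apply]
      simp_rw [qnorm_sub_comm]
  exact le_antisymm (key Y X) (key X Y)

lemma pdist_eq_zero_of_pts_eq [Fact (1 ≤ q)] (h : X.pts = Y.pts) : pdist ∞ q X Y = 0 := by
  have : MatchableWithin q 0 X.pts Y.pts := ⟨id, h ▸ bijOn_id _, fun x _ => by simp⟩
  simpa using this.pdist_le

end Pdist

-- The curves `μ`, `ν` of the theorem: the `k`-point reaches the diagonal at time `1`, the
-- `m`-point at time `1/3`.
def IsTwoPointCurve (k m : ℝ) (ρ : ℝ → Diagram) : Prop :=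
  (∀ t ∈ Icc (0 : ℝ) (1 / 3), (ρ t).pts =
    insert ((k / 2 * t, k / 2 * (2 - t)), 0)
      (insert ((m / 2 * (3 * t), m / 2 * (2 - 3 * t)), 1) diagSet)) ∧
  (∀ t ∈ Icc (1 / 3 : ℝ) 1, (ρ t).pts = insert ((k / 2 * t, k / 2 * (2 - t)), 0) diagSet)

namespace IsTwoPointCurve

variable {k m : ℝ} {ρ : ℝ → Diagram}

-- For `t ≥ 1/3` the `m`-point is frozen at `((m/2, m/2), 1)`, which already lies in `diagSet`.
lemma pts_eq (hρ : IsTwoPointCurve k m ρ) {t : ℝ} (ht : t ∈ Icc (0 : ℝ) 1) :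
    (ρ t).pts = insert ((k / 2 * t, k / 2 * (2 - t)), 0)
      (insert ((m / 2 * (3 * min t (1 / 3)), m / 2 * (2 - 3 * min t (1 / 3))), 1) diagSet) := by
  rcases le_total t (1 / 3) with ht3 | ht3
  · rw [min_eq_left ht3, hρ.1 t ⟨ht.1, ht3⟩]
  · have hdiag : ((m / 2 * (3 * (1 / 3)), m / 2 * (2 - 3 * (1 / 3))), 1) ∈ diagSet := by
      show m / 2 * (3 * (1 / 3)) = m / 2 * (2 - 3 * (1 / 3)); ring
    rw [min_eq_right ht3, insert_eq_of_mem hdiag, hρ.2 t ⟨ht3, ht.2⟩]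

lemma kpoint_mem (hρ : IsTwoPointCurve k m ρ) {t : ℝ} (ht : t ∈ Icc (0 : ℝ) 1) :
    ((k / 2 * t, k / 2 * (2 - t)), 0) ∈ (ρ t).pts := by
  rw [hρ.pts_eq ht]
  exact mem_insert _ _

lemma pers_le (hρ : IsTwoPointCurve k m ρ) (hm : 0 ≤ m) (hmk : m ≤ k) {t : ℝ}
    (ht : t ∈ Icc (0 : ℝ) 1) : ∀ y ∈ (ρ t).pts, pers y.1 ≤ k * (1 - t) := by
  have hk : 0 ≤ k * (1 - t) := mul_nonneg (hm.trans hmk) (by linarith [ht.2])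
  rw [hρ.pts_eq ht]
  rintro y (rfl | rfl | hy)
  · simp only [pers]; linarith
  · have h3 : 1 - 3 * min t (1 / 3) ≤ 1 - t := by
      rcases min_cases t (1 / 3) with ⟨h, -⟩ | ⟨h, -⟩ <;> rw [h] <;> linarith [ht.1, ht.2]
    simp only [pers]
    have h1t : 0 ≤ 1 - t := by linarith [ht.2]
    nlinarith [mul_le_mul_of_nonneg_left h3 hm, mul_le_mul_of_nonneg_right hmk h1t]
  · rw [pers, show y.1.2 = y.1.1 from hy.symm, sub_self]
    exact hk

variable {q : ℝ≥0∞} [Fact (1 ≤ q)]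

lemma le_pdist (hρ : IsTwoPointCurve k m ρ) (hm : 0 ≤ m) (hmk : m ≤ k) {s t : ℝ}
    (hs : 0 ≤ s) (hst : s ≤ t) (ht : t ≤ 1) :
    ENNReal.ofReal ((t - s) * k / 2 * qnorm q (1, -1)) ≤ pdist ∞ q (ρ s) (ρ t) := by
  have key := le_pdist_of_forall_le_abs_sub_pers (q := q) (δ := (t - s) * k)
    (hρ.kpoint_mem ⟨hs, hst.trans ht⟩) fun y hy => by
      have := hρ.pers_le hm hmk ⟨hs.trans hst, ht⟩ y hy
      refine le_trans ?_ (le_abs_self _)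
      simp only [pers] at this ⊢
      linarith
  convert key using 2
  ring

lemma matchableWithin (hρ : IsTwoPointCurve k m ρ) (hm : 0 < m) (hmk : 3 * m < k) {s t : ℝ}
    (hs : 0 ≤ s) (hst : s ≤ t) (ht : t ≤ 1) :
    MatchableWithin q ((t - s) * k / 2 * qnorm q (1, -1)) (ρ s).pts (ρ t).pts := by
  have hk : 0 < k := by linarith
  have hB : 0 ≤ (t - s) * k / 2 := by nlinarith
  rcases hst.eq_or_lt with rfl | hst'
  · exact matchableWithin_refl (by simp) _
  rcases lt_or_ge s (1 / 3) with hs3 | hs3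
  · rw [hρ.1 s ⟨hs, hs3.le⟩, hρ.pts_eq ⟨hs.trans hst, ht⟩]
    have hmin : min t (1 / 3) ≤ t := min_le_left _ _
    have hmin' : s ≤ min t (1 / 3) := le_min hst hs3.le
    refine matchableWithin_insert_insert_diagSet ?_ ?_ (by simp) (by simp)
      (mul_nonneg hB qnorm_one_neg_one_pos.le) (qnorm_sub_le_of_add_eq (by ring) ?_)
      (qnorm_sub_le_of_add_eq (by ring) ?_)
    · show k / 2 * s ≠ k / 2 * (2 - s)
      intro h; nlinarith
    · show m / 2 * (3 * s) ≠ m / 2 * (2 - 3 * s)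
      intro h; nlinarith
    · rw [abs_le]; constructor <;> nlinarith
    · rw [abs_le]; constructor <;> nlinarith
  · rw [hρ.2 s ⟨hs3, hst.trans ht⟩, hρ.2 t ⟨hs3.trans hst, ht⟩]
    refine (matchableWithin_refl (mul_nonneg hB qnorm_one_neg_one_pos.le) diagSet)
      |>.extend_of_diagSet_subset ?_ subset_rfl id (qnorm_sub_le_of_add_eq (by ring) ?_)
    · show k / 2 * s ≠ k / 2 * (2 - s)
      intro h; nlinarith
    · rw [abs_le]; constructor <;> nlinarith

lemma pdist_eq (hρ : IsTwoPointCurve k m ρ) (hm : 0 < m) (hmk : 3 * m < k) {s t : ℝ}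
    (hs : s ∈ Icc (0 : ℝ) 1) (ht : t ∈ Icc (0 : ℝ) 1) :
    pdist ∞ q (ρ s) (ρ t) = ENNReal.ofReal (|t - s| * k / 2 * qnorm q (1, -1)) := by
  wlog hst : s ≤ t generalizing s t
  · rw [pdist_comm, this ht hs (le_of_not_ge hst), abs_sub_comm]
  rw [abs_of_nonneg (sub_nonneg.2 hst)]
  exact le_antisymm (hρ.matchableWithin hm hmk hs.1 hst ht.2).pdist_le
    (hρ.le_pdist hm.le (by linarith) hs.1 hst ht.2)

lemma pdist_eq_mul (hρ : IsTwoPointCurve k m ρ) (hm : 0 < m) (hmk : 3 * m < k) {s t : ℝ}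
    (hs : s ∈ Icc (0 : ℝ) 1) (ht : t ∈ Icc (0 : ℝ) 1) :
    pdist ∞ q (ρ s) (ρ t) = ENNReal.ofReal |t - s| * pdist ∞ q (ρ 0) (ρ 1) := by
  have h01 : (0 : ℝ) ∈ Icc (0 : ℝ) 1 := ⟨le_rfl, zero_le_one⟩
  have h11 : (1 : ℝ) ∈ Icc (0 : ℝ) 1 := ⟨zero_le_one, le_rfl⟩
  rw [hρ.pdist_eq hm hmk hs ht, hρ.pdist_eq hm hmk h01 h11, ← ENNReal.ofReal_mul (abs_nonneg _)]
  congr 1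
  norm_num
  ring

lemma pdist_one_emptyD (hρ : IsTwoPointCurve k m ρ) : pdist ∞ q (ρ 1) emptyD = 0 := by
  refine pdist_eq_zero_of_pts_eq ?_
  have hdiag : ((k / 2 * 1, k / 2 * (2 - 1)), 0) ∈ diagSet := by
    show k / 2 * 1 = k / 2 * (2 - 1); ring
  rw [hρ.2 1 ⟨by norm_num, le_rfl⟩, insert_eq_of_mem hdiag]
  rfl

lemma pdist_ne_zero {m' : ℝ} {ρ' : ℝ → Diagram} (hρ : IsTwoPointCurve k m ρ)
    (hρ' : IsTwoPointCurve k m' ρ') (hm' : 0 < m') (hmm' : m' < m) (hmk : m < k) {t : ℝ}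
    (ht : t ∈ Ico (0 : ℝ) (1 / 3)) : pdist ∞ q (ρ t) (ρ' t) ≠ 0 := by
  obtain ⟨ht0, ht3⟩ := ht
  set δ := min ((m - m') * (1 - 3 * t)) ((k - m) * (1 - t))
  have hδ : 0 < δ := lt_min (by nlinarith) (by nlinarith)
  have hδ₁ : δ ≤ (m - m') * (1 - 3 * t) := min_le_left _ _
  have hδ₂ : δ ≤ (k - m) * (1 - t) := min_le_right _ _
  have hx₀ : ((m / 2 * (3 * t), m / 2 * (2 - 3 * t)), 1) ∈ (ρ t).pts := by
    rw [hρ.1 t ⟨ht0, ht3.le⟩]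
    exact mem_insert_of_mem _ (mem_insert _ _)
  have key := le_pdist_of_forall_le_abs_sub_pers (q := q) (δ := δ) hx₀ fun y hy => by
    rw [hρ'.1 t ⟨ht0, ht3.le⟩] at hy
    rcases hy with rfl | rfl | hy
    · rw [abs_sub_comm]; refine le_trans ?_ (le_abs_self _); simp only [pers]; nlinarith
    · refine le_trans ?_ (le_abs_self _); simp only [pers]; nlinarith
    · rw [pers, pers, show y.1.2 = y.1.1 from hy.symm]
      refine le_trans ?_ (le_abs_self _); nlinarith
  intro h0
  rw [h0, nonpos_iff_eq_zero, ENNReal.ofReal_eq_zero] at key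
  have := mul_pos hδ (qnorm_one_neg_one_pos (q := q))
  linarith

end IsTwoPointCurve

/-- Branching geodesics in `(D_∞[l^q], d_∞[l^q])`: for `0 < l < j`, `3j < k`, the curves
`μ` (from `Y = {(0,k),(0,j)}` to `∅`) and `ν` (from `Z = {(0,k),(0,l)}` to `∅`) defined
in the statement are geodesics, agree on `[1/3,1]`, and differ on `[0,1/3)`. -/
theorem branching_geodesics_infty (q : ℝ≥0∞) (hq : 1 ≤ q)
    (l j k : ℝ) (hl : 0 < l) (hlj : l < j) (hjk : 3 * j < k)
    (μ ν : ℝ → Diagram)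
    (hμ1 : ∀ t ∈ Set.Icc (0 : ℝ) (1 / 3), (μ t).pts =
      insert ((k / 2 * t, k / 2 * (2 - t)), 0)
        (insert ((j / 2 * (3 * t), j / 2 * (2 - 3 * t)), 1) diagSet))
    (hμ2 : ∀ t ∈ Set.Icc (1 / 3 : ℝ) 1, (μ t).pts =
      insert ((k / 2 * t, k / 2 * (2 - t)), 0) diagSet)
    (hν1 : ∀ t ∈ Set.Icc (0 : ℝ) (1 / 3), (ν t).pts =
      insert ((k / 2 * t, k / 2 * (2 - t)), 0)
        (insert ((l / 2 * (3 * t), l / 2 * (2 - 3 * t)), 1) diagSet))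
    (hν2 : ∀ t ∈ Set.Icc (1 / 3 : ℝ) 1, (ν t).pts =
      insert ((k / 2 * t, k / 2 * (2 - t)), 0) diagSet) :
    (∀ s ∈ Set.Icc (0 : ℝ) 1, ∀ t ∈ Set.Icc (0 : ℝ) 1,
        pdist ∞ q (μ s) (μ t) = ENNReal.ofReal |t - s| * pdist ∞ q (μ 0) (μ 1)) ∧
    (∀ s ∈ Set.Icc (0 : ℝ) 1, ∀ t ∈ Set.Icc (0 : ℝ) 1,
        pdist ∞ q (ν s) (ν t) = ENNReal.ofReal |t - s| * pdist ∞ q (ν 0) (ν 1)) ∧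
    pdist ∞ q (μ 1) emptyD = 0 ∧ pdist ∞ q (ν 1) emptyD = 0 ∧
    (∀ t ∈ Set.Icc (1 / 3 : ℝ) 1, pdist ∞ q (μ t) (ν t) = 0) ∧
    (∀ t ∈ Set.Ico (0 : ℝ) (1 / 3), pdist ∞ q (μ t) (ν t) ≠ 0) := by
  have : Fact (1 ≤ q) := ⟨hq⟩
  have hj : 0 < j := hl.trans hlj
  have hμ : IsTwoPointCurve k j μ := ⟨hμ1, hμ2⟩
  have hν : IsTwoPointCurve k l ν := ⟨hν1, hν2⟩
  exact ⟨fun s hs t ht => hμ.pdist_eq_mul hj hjk hs ht,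
    fun s hs t ht => hν.pdist_eq_mul hl (by linarith) hs ht,
    hμ.pdist_one_emptyD, hν.pdist_one_emptyD,
    fun t ht => pdist_eq_zero_of_pts_eq ((hμ2 t ht).trans (hν2 t ht).symm),
    fun t ht => hμ.pdist_ne_zero hν hl hlj (by linarith) ht⟩
end

section
/- Convexity of costs across subdivided geodesics: let p ∈ [2,∞), let t_0 = 0 < t_1 < ⋯ < t_n = 1 be an equipartition t_i = i/n, and let a_{i,x} ≥ 0 (for x in a countable index set and 1 ≤ i ≤ n) satisfy ∑_x a_{i,x}^p = (D/n)^p for each i, for some D ≥ 0. Then ∑_x ( (1/t_m^{p−1}) (∑_{i=1}^m a_{i,x})^p + (1/(1−t_m)^{p−1}) (∑_{i=m+1}^n a_{i,x})^p ) ≤ D^p for any 1 ≤ m ≤ n−1. -/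
/-!
Pointwise in `x`, the power-mean inequality `(∑ i ∈ s, a i) ^ p ≤ #s ^ (p - 1) * ∑ i ∈ s, a i ^ p`
applied to the blocks `[1, m]` and `[m + 1, n]` exactly cancels the weights
`t_m ^ (1 - p)` and `(1 - t_m) ^ (1 - p)` up to the common factor `n ^ (p - 1)`, so the summand
is at most `n ^ (p - 1) * ∑ i ∈ [1, n], a i x ^ p`. Summing over `x` and inserting the leg costs
gives `n ^ (p - 1) * n * (D / n) ^ p = D ^ p`.
-/

open Finset Real

/-- An equality unless `k ^ q = 0`, where the junk value `1 / 0 = 0` makes the left side vanish. -/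
lemma one_div_div_rpow_mul_rpow_le {k N : ℝ} (hk : 0 ≤ k) (hN : 0 ≤ N) (q : ℝ) :
    1 / (k / N) ^ q * k ^ q ≤ N ^ q := by
  rw [div_rpow hk hN, one_div_div]
  rcases (rpow_nonneg hk q).eq_or_lt with h | h
  · rw [← h, mul_zero]; exact rpow_nonneg hN q
  · rw [div_mul_cancel₀ _ h.ne']

lemma one_div_card_div_rpow_mul_sum_rpow_le {α : Type*} {s : Finset α} {f : α → ℝ}
    (hf : ∀ i ∈ s, 0 ≤ f i) {p N : ℝ} (hp : 1 ≤ p) (hN : 0 ≤ N) :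
    1 / ((#s : ℝ) / N) ^ (p - 1) * (∑ i ∈ s, f i) ^ p ≤ N ^ (p - 1) * ∑ i ∈ s, f i ^ p :=
  calc 1 / ((#s : ℝ) / N) ^ (p - 1) * (∑ i ∈ s, f i) ^ p
      ≤ 1 / ((#s : ℝ) / N) ^ (p - 1) * ((#s : ℝ) ^ (p - 1) * ∑ i ∈ s, f i ^ p) := by
        gcongr
        exact rpow_sum_le_const_mul_sum_rpow_of_nonneg s hp hf
    _ = 1 / ((#s : ℝ) / N) ^ (p - 1) * (#s : ℝ) ^ (p - 1) * ∑ i ∈ s, f i ^ p := by ring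
    _ ≤ N ^ (p - 1) * ∑ i ∈ s, f i ^ p := by
        gcongr
        · exact sum_nonneg fun i hi => rpow_nonneg (hf i hi) p
        · exact one_div_div_rpow_mul_rpow_le (Nat.cast_nonneg _) hN _

lemma sum_Icc_one_add_sum_Icc_succ {M : Type*} [AddCommMonoid M] (f : ℕ → M) {m n : ℕ}
    (hmn : m ≤ n) :
    ∑ i ∈ Icc 1 m, f i + ∑ i ∈ Icc (m + 1) n, f i = ∑ i ∈ Icc 1 n, f i := by
  simpa only [← Icc_add_one_left_eq_Ioc, zero_add] using sum_Ioc_consecutive f (Nat.zero_le m) hmn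

lemma weighted_rpow_sum_Icc_split_le {f : ℕ → ℝ} (hf : ∀ i, 0 ≤ f i) {p : ℝ} (hp : 1 ≤ p)
    {m n : ℕ} (hmn : m ≤ n) (hn : 0 < n) :
    1 / ((m : ℝ) / n) ^ (p - 1) * (∑ i ∈ Icc 1 m, f i) ^ p
        + 1 / (1 - (m : ℝ) / n) ^ (p - 1) * (∑ i ∈ Icc (m + 1) n, f i) ^ p
      ≤ (n : ℝ) ^ (p - 1) * ∑ i ∈ Icc 1 n, f i ^ p := by
  have hleft : (#(Icc 1 m) : ℝ) = m := by simp
  have hright : (#(Icc (m + 1) n) : ℝ) / n = 1 - (m : ℝ) / n := by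
    rw [Nat.card_Icc, Nat.add_sub_add_right, Nat.cast_sub hmn]
    field_simp
  rw [← sum_Icc_one_add_sum_Icc_succ _ hmn, mul_add, ← hright, ← hleft]
  exact add_le_add
    (one_div_card_div_rpow_mul_sum_rpow_le (fun i _ => hf i) hp (Nat.cast_nonneg n))
    (one_div_card_div_rpow_mul_sum_rpow_le (fun i _ => hf i) hp (Nat.cast_nonneg n))

lemma rpow_sub_one_mul_mul_div_rpow {N : ℝ} (hN : 0 < N) {D : ℝ} (hD : 0 ≤ D) (p : ℝ) :
    N ^ (p - 1) * (N * (D / N) ^ p) = D ^ p := by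
  rw [div_rpow hD hN.le, ← mul_assoc, ← rpow_add_one hN.ne', sub_add_cancel]
  field_simp

theorem subdivided_geodesic_cost_bound_general (p : ℝ) (hp : 2 ≤ p) {ι : Type*}
    (n : ℕ) (a : ℕ → ι → ℝ) (ha : ∀ i x, 0 ≤ a i x)
    (D : ℝ) (hD : 0 ≤ D)
    (hSummable : ∀ i, Summable (fun x => a i x ^ p))
    (hleg : ∀ i, 1 ≤ i → i ≤ n → ∑' x, a i x ^ p = (D / n) ^ p)
    (m : ℕ) (hm2 : m < n) :
    ∑' x, ((1 / ((m : ℝ) / n) ^ (p - 1)) * (∑ i ∈ Finset.Icc 1 m, a i x) ^ p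
        + (1 / (1 - (m : ℝ) / n) ^ (p - 1)) * (∑ i ∈ Finset.Icc (m + 1) n, a i x) ^ p)
      ≤ D ^ p := by
  have hn : 0 < n := pos_of_gt hm2
  have hright : (0 : ℝ) ≤ 1 - (m : ℝ) / n := by
    rw [sub_nonneg, div_le_one (by positivity)]; exact_mod_cast hm2.le
  have hpoint x := weighted_rpow_sum_Icc_split_le (ha · x) (by linarith : 1 ≤ p) hm2.le hn
  have hmajorant : Summable fun x => (n : ℝ) ^ (p - 1) * ∑ i ∈ Icc 1 n, a i x ^ p :=
    (summable_sum fun i _ => hSummable i).mul_left _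
  have hnonneg x : 0 ≤ 1 / ((m : ℝ) / n) ^ (p - 1) * (∑ i ∈ Icc 1 m, a i x) ^ p
      + 1 / (1 - (m : ℝ) / n) ^ (p - 1) * (∑ i ∈ Icc (m + 1) n, a i x) ^ p := by
    have := rpow_nonneg hright (p - 1)
    have := sum_nonneg fun i (_ : i ∈ Icc 1 m) => ha i x
    have := sum_nonneg fun i (_ : i ∈ Icc (m + 1) n) => ha i x
    positivity
  calc _ ≤ ∑' x, (n : ℝ) ^ (p - 1) * ∑ i ∈ Icc 1 n, a i x ^ p :=
        (hmajorant.of_nonneg_of_le hnonneg hpoint).tsum_le_tsum hpoint hmajorant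
    _ = (n : ℝ) ^ (p - 1) * ∑ i ∈ Icc 1 n, ∑' x, a i x ^ p := by
        rw [tsum_mul_left, Summable.tsum_finsetSum fun i _ => hSummable i]
    _ = (n : ℝ) ^ (p - 1) * (n * (D / n) ^ p) := by
        rw [sum_congr rfl fun i hi => hleg i (mem_Icc.1 hi).1 (mem_Icc.1 hi).2]
        simp
    _ = D ^ p := rpow_sub_one_mul_mul_div_rpow (by positivity) hD p

/-- Convexity of costs across a subdivided geodesic: if each leg of an `n`-leg
subdivision has total `p`-cost `(D/n)^p`, then the combined two-sided Jensen-type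
cost at the breakpoint `t_m = m/n` is at most `D^p`. -/
theorem subdivided_geodesic_cost_bound (p : ℝ) (hp : 2 ≤ p) {ι : Type*} [Countable ι]
    (n : ℕ) (hn : 1 ≤ n) (a : ℕ → ι → ℝ) (ha : ∀ i x, 0 ≤ a i x)
    (D : ℝ) (hD : 0 ≤ D)
    (hSummable : ∀ i, Summable (fun x => a i x ^ p))
    (hleg : ∀ i, 1 ≤ i → i ≤ n → ∑' x, a i x ^ p = (D / n) ^ p)
    (m : ℕ) (hm1 : 1 ≤ m) (hm2 : m < n) :
    ∑' x, ((1 / ((m : ℝ) / n) ^ (p - 1)) * (∑ i ∈ Finset.Icc 1 m, a i x) ^ p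
        + (1 / (1 - (m : ℝ) / n) ^ (p - 1)) * (∑ i ∈ Finset.Icc (m + 1) n, a i x) ^ p)
      ≤ D ^ p :=
  subdivided_geodesic_cost_bound_general p hp n a ha D hD hSummable hleg m hm2
end

section
/- The pseudometric d_p[l^q] on persistence diagrams is not a metric: there exist distinct persistence diagrams X ≠ Y with d_p[l^q](X,Y) = 0 for all p, q ∈ [1,∞]. Concretely, if A and B are two distinct countable dense subsets of [0,1], then X := {(0,a) : a ∈ A} ∪ Δ^∞ and Y := {(0,b) : b ∈ B} ∪ Δ^∞ satisfy d_p[l^q](X,Y) = 0 for p = ∞ (and the infimum of matching cost is 0). -/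
open scoped ENNReal
open Set

/-!
Enumerate `A` and `B` and match them back and forth: the pair chosen at step `k` is at distance
less than `ε / 2 ^ (k + 1)`, and alternating steps make sure that every point of `A` and every
point of `B` is eventually matched. Each step is possible because near any point of `(0, 1)` there
are infinitely many points of `A` and of `B`. Extended by the identity on the diagonal, this
matching of `X` with `Y` moves points only vertically, so its `l^p[l^q]` cost is at most its `l^1`
cost `∑ |a - g a| ≤ ε`.
-/

open scoped Topology
open Function

section BackAndForth

variable {α β : Type*} (R : ℕ → α → β → Prop)

lemma exists_fresh_pair_of_forth_back [Nonempty β]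
    (forth : ∀ k a (t : Finset β), ∃ b ∉ t, R k a b)
    (back : ∀ k b (s : Finset α), ∃ a ∉ s, R k a b)
    (k : ℕ) (s : Finset α) (t : Finset β) (a₀ : α) :
    ∃ p : α × β, p.1 ∉ s ∧ p.2 ∉ t ∧ R k p.1 p.2 ∧ (a₀ = p.1 ∨ a₀ ∈ s) := by
  obtain ⟨a, has, ha₀⟩ : ∃ a ∉ s, a₀ = a ∨ a₀ ∈ s := by
    by_cases h : a₀ ∈ s
    · obtain ⟨a, has, -⟩ := back k (Classical.arbitrary β) s
      exact ⟨a, has, .inr h⟩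
    · exact ⟨a₀, h, .inl rfl⟩
  obtain ⟨b, hbt, hab⟩ := forth k a t
  exact ⟨(a, b), has, hbt, hab, ha₀⟩

theorem exists_bijective_seq_of_forth_back [Countable α] [Countable β] [Nonempty α] [Nonempty β]
    (forth : ∀ k a (t : Finset β), ∃ b ∉ t, R k a b)
    (back : ∀ k b (s : Finset α), ∃ a ∉ s, R k a b) :
    ∃ (u : ℕ → α) (v : ℕ → β), Bijective u ∧ Bijective v ∧ ∀ k, R k (u k) (v k) := by
  classical
  obtain ⟨eα, heα⟩ := exists_surjective_nat α
  obtain ⟨eβ, heβ⟩ := exists_surjective_nat β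
  -- even steps make sure `eα (k / 2)` is matched, odd steps `eβ (k / 2)`
  have step : ∀ k (s : Finset α) (t : Finset β), ∃ p : α × β, p.1 ∉ s ∧ p.2 ∉ t ∧
      R k p.1 p.2 ∧ (Even k → eα (k / 2) = p.1 ∨ eα (k / 2) ∈ s) ∧
      (¬Even k → eβ (k / 2) = p.2 ∨ eβ (k / 2) ∈ t) := by
    intro k s t
    by_cases hk : Even k
    · obtain ⟨⟨a, b⟩, has, hbt, hab, hcov⟩ :=
        exists_fresh_pair_of_forth_back R forth back k s t (eα (k / 2))
      exact ⟨(a, b), has, hbt, hab, fun _ => hcov, fun h => (h hk).elim⟩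
    · obtain ⟨⟨b, a⟩, hbt, has, hab, hcov⟩ :=
        exists_fresh_pair_of_forth_back (fun k b a => R k a b) back forth k t s (eβ (k / 2))
      exact ⟨(a, b), has, hbt, hab, fun h => (hk h).elim, fun _ => hcov⟩
  choose next hnext using step
  let S : ℕ → Finset α × Finset β := fun n => Nat.rec (∅, ∅)
    (fun k st => (insert (next k st.1 st.2).1 st.1, insert (next k st.1 st.2).2 st.2)) n
  let u : ℕ → α := fun k => (next k (S k).1 (S k).2).1
  let v : ℕ → β := fun k => (next k (S k).1 (S k).2).2
  have hS : ∀ n, (S n).1 = (Finset.range n).image u ∧ (S n).2 = (Finset.range n).image v := by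
    intro n
    induction n with
    | zero => simp [S]
    | succ n ih =>
      simp only [S, Finset.range_add_one, Finset.image_insert] at ih ⊢
      rw [← ih.1, ← ih.2]
      exact ⟨rfl, rfl⟩
  have hfresh : ∀ k, u k ∉ (Finset.range k).image u ∧ v k ∉ (Finset.range k).image v :=
    fun k => (hS k).1 ▸ (hS k).2 ▸ ⟨(hnext k _ _).1, (hnext k _ _).2.1⟩
  have hcovered : ∀ k, (Even k → eα (k / 2) ∈ range u) ∧ (¬Even k → eβ (k / 2) ∈ range v) := by
    intro k
    obtain ⟨-, -, -, hα, hβ⟩ := hnext k (S k).1 (S k).2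
    refine ⟨fun hk => (hα hk).elim (fun h => ⟨k, h.symm⟩) fun h => ?_,
      fun hk => (hβ hk).elim (fun h => ⟨k, h.symm⟩) fun h => ?_⟩
    · obtain ⟨i, -, hi⟩ := Finset.mem_image.1 ((hS k).1 ▸ h)
      exact ⟨i, hi⟩
    · obtain ⟨i, -, hi⟩ := Finset.mem_image.1 ((hS k).2 ▸ h)
      exact ⟨i, hi⟩
  refine ⟨u, v, ⟨Injective.of_lt_imp_ne fun i j hij h => (hfresh j).1 ?_, fun a => ?_⟩,
    ⟨Injective.of_lt_imp_ne fun i j hij h => (hfresh j).2 ?_, fun b => ?_⟩,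
    fun k => (hnext k _ _).2.2.1⟩
  · exact Finset.mem_image.2 ⟨i, Finset.mem_range.2 hij, h⟩
  · obtain ⟨m, rfl⟩ := heα a
    simpa using (hcovered (2 * m)).1 (even_two_mul m)
  · exact Finset.mem_image.2 ⟨i, Finset.mem_range.2 hij, h⟩
  · obtain ⟨m, rfl⟩ := heβ b
    simpa [show (2 * m + 1) / 2 = m by omega] using (hcovered (2 * m + 1)).2 (by simp)

end BackAndForth

section Density

variable {E : Type*} [EMetricSpace E] [∀ x : E, (𝓝[≠] x).NeBot]

lemma exists_notMem_finset_edist_lt {S U : Set E} (hU : IsOpen U) (hUS : U ⊆ closure S)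
    {x : E} (hx : x ∈ U) {δ : ℝ≥0∞} (hδ : 0 < δ) (t : Finset S) :
    ∃ s : S, s ∉ t ∧ edist x s < δ := by
  have ht : ((↑) '' (t : Set S) : Set E).Finite := t.finite_toSet.image _
  have hV : IsOpen ((U ∩ Metric.eball x δ) \ ((↑) '' (t : Set S))) :=
    (hU.inter Metric.isOpen_eball).sdiff ht.isClosed
  obtain ⟨y, hy⟩ := ((infinite_of_mem_nhds x ((hU.inter Metric.isOpen_eball).mem_nhds
    ⟨hx, Metric.mem_eball_self hδ⟩)).sdiff ht).nonempty
  obtain ⟨s, hsV, hsS⟩ := mem_closure_iff.1 (hUS hy.1.1) _ hV hy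
  exact ⟨⟨s, hsS⟩, fun hst => hsV.2 ⟨_, hst, rfl⟩, Metric.mem_eball'.1 hsV.1.2⟩

theorem exists_equiv_tsum_edist_le {A B U : Set E} (hU : IsOpen U) (hU₀ : U.Nonempty)
    (hAU : A ⊆ U) (hBU : B ⊆ U) (hUA : U ⊆ closure A) (hUB : U ⊆ closure B)
    (hAc : A.Countable) (hBc : B.Countable) {ε : ℝ≥0∞} (hε : 0 < ε) :
    ∃ g : A ≃ B, ∑' a : A, edist (a : E) (g a) ≤ ε := by
  have : Countable A := hAc.to_subtype
  have : Countable B := hBc.to_subtype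
  have : Nonempty A := (closure_nonempty_iff.1 (hU₀.mono hUA)).to_subtype
  have : Nonempty B := (closure_nonempty_iff.1 (hU₀.mono hUB)).to_subtype
  have hδ : ∀ k : ℕ, 0 < ε * 2⁻¹ ^ (k + 1) := fun k => ENNReal.mul_pos hε.ne' (by simp)
  obtain ⟨u, v, hu, hv, huv⟩ := exists_bijective_seq_of_forth_back
    (fun k (a : A) (b : B) => edist (a : E) b < ε * 2⁻¹ ^ (k + 1))
    (fun k a t => exists_notMem_finset_edist_lt hU hUB (hAU a.2) (hδ k) t)
    (fun k b s => by
      simpa only [edist_comm] using exists_notMem_finset_edist_lt hU hUA (hBU b.2) (hδ k) s)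
  let eu := Equiv.ofBijective u hu
  refine ⟨eu.symm.trans (Equiv.ofBijective v hv), ?_⟩
  calc ∑' a : A, edist (a : E) (eu.symm.trans (Equiv.ofBijective v hv) a)
      = ∑' k, edist (u k : E) (v k) := by
        rw [← eu.tsum_eq]
        simp [eu]
    _ ≤ ∑' k : ℕ, ε * 2⁻¹ ^ (k + 1) := ENNReal.tsum_le_tsum fun k => (huv k).le
    _ = ε := by
        rw [ENNReal.tsum_mul_left, ENNReal.tsum_geometric_add_one, ENNReal.one_sub_inv_two,
          inv_inv, ENNReal.inv_mul_cancel two_ne_zero ENNReal.ofNat_ne_top, mul_one]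

end Density

lemma qnorm_zero_fst {q : ℝ≥0∞} (hq : q ≠ 0) (t : ℝ) : qnorm q (0, t) = |t| := by
  unfold qnorm
  split_ifs with h
  · simp
  · have hq' : q.toReal ≠ 0 := ENNReal.toReal_ne_zero.2 ⟨hq, h⟩
    rw [abs_zero, Real.zero_rpow hq', zero_add, ← Real.rpow_mul (abs_nonneg t),
      mul_one_div_cancel hq', Real.rpow_one]

lemma ENNReal.tsum_rpow_le_rpow_tsum {ι : Type*} (f : ι → ℝ≥0∞) {p : ℝ} (hp : 1 ≤ p) :
    ∑' i, f i ^ p ≤ (∑' i, f i) ^ p := by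
  classical
  have hfin : ∀ s : Finset ι, ∑ i ∈ s, f i ^ p ≤ (∑ i ∈ s, f i) ^ p := by
    intro s
    induction s using Finset.induction_on with
    | empty => simp [ENNReal.zero_rpow_of_pos (zero_lt_one.trans_le hp)]
    | insert i s hi ih =>
      rw [Finset.sum_insert hi, Finset.sum_insert hi]
      exact (add_le_add le_rfl ih).trans (ENNReal.add_rpow_le_rpow_add _ _ hp)
  rw [ENNReal.tsum_eq_iSup_sum]
  exact iSup_le fun s => (hfin s).trans
    (ENNReal.rpow_le_rpow (ENNReal.sum_le_tsum s) (zero_le_one.trans hp))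

lemma cost_le_tsum {p : ℝ≥0∞} (hp : 1 ≤ p) (q : ℝ≥0∞) {X Y : Diagram} (φ : X.pts ≃ Y.pts) :
    cost p q φ ≤ ∑' x : X.pts,
      ENNReal.ofReal (qnorm q ((x : (ℝ × ℝ) × ℕ).1 - ((φ x : (ℝ × ℝ) × ℕ)).1)) := by
  unfold cost
  split_ifs with h
  · exact iSup_le fun x => ENNReal.le_tsum x
  · have hp' : 1 ≤ p.toReal := by
      simpa using (ENNReal.toReal_le_toReal ENNReal.one_ne_top h).2 hp
    rw [one_div, ENNReal.rpow_inv_le_iff (zero_lt_one.trans_le hp')]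
    exact ENNReal.tsum_rpow_le_rpow_tsum _ hp'

def axisPts (A : Set ℝ) : Set ((ℝ × ℝ) × ℕ) := {z | ∃ a ∈ A, z = (((0 : ℝ), a), 0)} ∪ diagSet

lemma mk_mem_axisPts_iff {A : Set ℝ} {a : ℝ} (ha : a ≠ 0) :
    (((0 : ℝ), a), 0) ∈ axisPts A ↔ a ∈ A := by
  simp [axisPts, diagSet, ha.symm]

lemma axisPts_injOn : InjOn axisPts {A | (0 : ℝ) ∉ A} := by
  intro A hA B hB hAB
  ext a
  rcases eq_or_ne a 0 with rfl | ha
  · exact iff_of_false hA hB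
  · rw [← mk_mem_axisPts_iff ha, ← mk_mem_axisPts_iff ha, hAB]

noncomputable def axisEquiv {A : Set ℝ} (hA : (0 : ℝ) ∉ A) : A ⊕ diagSet ≃ axisPts A :=
  Equiv.ofBijective
    (Sum.elim (fun a => ⟨(((0 : ℝ), a), 0), .inl ⟨a, a.2, rfl⟩⟩) (fun d => ⟨d, .inr d.2⟩)) <| by
    refine ⟨Injective.sumElim (fun a b h => ?_) (fun d e h => ?_) (fun a d h => ?_), ?_⟩
    · exact Subtype.ext (by simpa using congrArg (fun z : axisPts A => z.1.1.2) h)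
    · simpa [Subtype.ext_iff] using h
    · obtain ⟨d, hd⟩ := d
      obtain rfl : (((0 : ℝ), (a : ℝ)), 0) = d := congrArg Subtype.val h
      exact hA ((show (0 : ℝ) = a from hd) ▸ a.2)
    · rintro ⟨z, ⟨a, ha, rfl⟩ | hz⟩
      · exact ⟨.inl ⟨a, ha⟩, rfl⟩
      · exact ⟨.inr ⟨z, hz⟩, rfl⟩

@[simp]
lemma axisEquiv_inl {A : Set ℝ} (hA : (0 : ℝ) ∉ A) (a : A) :
    (axisEquiv hA (.inl a) : (ℝ × ℝ) × ℕ) = (((0 : ℝ), (a : ℝ)), 0) := rfl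

@[simp]
lemma axisEquiv_inr {A : Set ℝ} (hA : (0 : ℝ) ∉ A) (d : diagSet) :
    (axisEquiv hA (.inr d) : (ℝ × ℝ) × ℕ) = d := rfl

lemma pdist_le_tsum_edist {A B : Set ℝ} (hA : (0 : ℝ) ∉ A) (hB : (0 : ℝ) ∉ B)
    {X Y : Diagram} (hX : X.pts = axisPts A) (hY : Y.pts = axisPts B) (g : A ≃ B)
    {p q : ℝ≥0∞} (hp : 1 ≤ p) (hq : q ≠ 0) :
    pdist p q X Y ≤ ∑' a : A, edist (a : ℝ) (g a) := by
  let eX := (axisEquiv hA).trans (Equiv.setCongr hX.symm)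
  let eY := (axisEquiv hB).trans (Equiv.setCongr hY.symm)
  let φ := eX.symm.trans ((g.sumCongr (Equiv.refl _)).trans eY)
  have hφ : ∀ s, φ (eX s) = eY (Sum.map g id s) := fun s => by simp [φ]
  have hdisp : ∀ s, ENNReal.ofReal (qnorm q ((eX s : (ℝ × ℝ) × ℕ).1 - (φ (eX s) : (ℝ × ℝ) × ℕ).1))
      = Sum.elim (fun a : A => edist (a : ℝ) (g a)) 0 s := by
    rintro (a | d)
    · rw [hφ]
      simp [eX, eY, qnorm_zero_fst hq, edist_dist, Real.dist_eq]
    · rw [hφ]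
      simp [eX, eY, ← Prod.mk_zero_zero, qnorm_zero_fst hq]
  calc pdist p q X Y ≤ cost p q φ := iInf_le _ φ
    _ ≤ _ := cost_le_tsum hp q φ
    _ = ∑' s, Sum.elim (fun a : A => edist (a : ℝ) (g a)) 0 s := by
      rw [← eX.tsum_eq]
      exact tsum_congr hdisp
    _ = ∑' a : A, edist (a : ℝ) (g a) := by
      rw [ENNReal.summable.tsum_sum ENNReal.summable]
      simp

/-- `d_p[l^q]` is only a pseudometric: if `A ≠ B` are countable subsets of `(0,1)` that
are dense in `[0,1]`, then the diagrams `X = {(0,a) : a ∈ A} ∪ Δ^∞` and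
`Y = {(0,b) : b ∈ B} ∪ Δ^∞` are distinct but at `d_p[l^q]`-distance zero for all
`p, q ∈ [1,∞]`. -/
theorem pdist_not_a_metric (A B : Set ℝ)
    (hA : A ⊆ Set.Ioo (0 : ℝ) 1) (hB : B ⊆ Set.Ioo (0 : ℝ) 1)
    (hAc : A.Countable) (hBc : B.Countable)
    (hAd : Set.Icc (0 : ℝ) 1 ⊆ closure A) (hBd : Set.Icc (0 : ℝ) 1 ⊆ closure B)
    (hAB : A ≠ B) (X Y : Diagram)
    (hX : X.pts = {z | ∃ a ∈ A, z = (((0 : ℝ), a), 0)} ∪ diagSet)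
    (hY : Y.pts = {z | ∃ b ∈ B, z = (((0 : ℝ), b), 0)} ∪ diagSet) :
    X.pts ≠ Y.pts ∧ ∀ p q : ℝ≥0∞, 1 ≤ p → 1 ≤ q → pdist p q X Y = 0 := by
  have hA0 : (0 : ℝ) ∉ A := fun h => lt_irrefl 0 (hA h).1
  have hB0 : (0 : ℝ) ∉ B := fun h => lt_irrefl 0 (hB h).1
  refine ⟨fun hXY => hAB (axisPts_injOn hA0 hB0 (hX.symm.trans (hXY.trans hY))),
    fun p q hp hq => le_antisymm (le_of_forall_gt_imp_ge_of_dense fun ε hε => ?_) zero_le⟩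
  obtain ⟨g, hg⟩ := exists_equiv_tsum_edist_le isOpen_Ioo (nonempty_Ioo.2 zero_lt_one) hA hB
    (Ioo_subset_Icc_self.trans hAd) (Ioo_subset_Icc_self.trans hBd) hAc hBc hε
  exact (pdist_le_tsum_edist hA0 hB0 hX hY g hp (zero_lt_one.trans_le hq).ne').trans hg
end
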